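/- Assume in addition that ν is a finite measure. Then for every real number θ with θ − 1 > p̲ there exists γ > 1 such that ∫_S (Σ_{i≥1} s_i^{θ})^{γ} ν(ds) < ∞. -/

import Mathlib

open MeasureTheory Real Set Filter

noncomputable section

/-- Real power with the convention `0 ^ r = 0` for every exponent `r`. -/
def pw (x r : ℝ) : ℝ := if x = 0 then 0 else x ^ r

/-- The state space `S` of ranked mass configurations: nonincreasing nonnegative
sequences with total sum at most `1` (sum condition stated via partial sums). -/
def inS (s : ℕ → ℝ) : Prop :=
  (∀ i, 0 ≤ s i) ∧ (∀ i, s (i + 1) ≤ s i) ∧ ∀ F : Finset ℕ, ∑ i ∈ F, s i ≤ 1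

/-- The configuration `(1, 0, 0, …)`. -/
def oneConf : ℕ → ℝ := fun i => if i = 0 then 1 else 0

/-- A dislocation measure: a measure on sequences, carried by `S`, giving no mass
to `(1,0,…)`, integrating `1 - s₁`, and conserving total mass (carried by
configurations with `Σ sᵢ = 1`). -/
structure IsDislocation (ν : Measure (ℕ → ℝ)) : Prop where
  carried : ν {s | ¬ (inS s ∧ HasSum s 1)} = 0
  no_one : ν {oneConf} = 0
  int_one_sub : ∫⁻ s, ENNReal.ofReal (1 - s 0) ∂ν < ⊤

/-- `p̲ := inf {p ∈ ℝ : ∫_S Σ_{i≥2} sᵢ^{p+1} ν(ds) < ∞}`, as an extended real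
(possibly `-∞`, and `+∞` if no `p` qualifies). -/
def pLow (ν : Measure (ℕ → ℝ)) : EReal :=
  sInf {x : EReal | ∃ p : ℝ, x = (p : EReal) ∧
    ∫⁻ s, ∑' i, ENNReal.ofReal (pw (s (i + 1)) (p + 1)) ∂ν < ⊤}

/-- `Φ(q) := ∫_S (1 - Σ_{i≥1} sᵢ^{q+1}) ν(ds)`. -/
def Phi (ν : Measure (ℕ → ℝ)) (q : ℝ) : ℝ :=
  ∫ s, (1 - ∑' i, pw (s i) (q + 1)) ∂ν

/-!
With weights `sᵢ` summing to `1`, Jensen's inequality applied to `Σ sᵢ^θ = Σ sᵢ · sᵢ^{θ-1}`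
gives `(Σ sᵢ^θ)^γ ≤ Σ sᵢ^{γ(θ-1)+1}`. Pick `p > p̲` below `θ - 1` with
`∫ Σ_{i≥2} sᵢ^{p+1} dν < ∞`, and `γ > 1` so close to `1` that `γ(θ-1) > p`. Since `sᵢ ≤ 1`, every
term with `i ≥ 2` is at most `sᵢ^{p+1}`, and the first one is at most `1` or `s₂^{γ(θ-1)+1}`. So the
integrand is bounded by `1 + 2 Σ_{i≥2} sᵢ^{p+1}`, which is integrable because `ν` is finite.
-/

open scoped ENNReal Topology

/-- Jensen's inequality for `x ↦ x ^ γ`, obtained from Hölder's inequality for the counting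
measure with exponents `γ / (γ - 1)` and `γ`. -/
theorem ENNReal.tsum_mul_rpow_le {ι : Type*} (a x : ι → ℝ≥0∞) (ha : ∑' i, a i ≤ 1) {γ : ℝ}
    (hγ : 1 ≤ γ) : (∑' i, a i * x i) ^ γ ≤ ∑' i, a i * x i ^ γ := by
  rcases hγ.eq_or_lt with rfl | hγ
  · simp
  let _ : MeasurableSpace ι := ⊤
  have hγ0 : 0 < γ := one_pos.trans hγ
  have hpq : (γ / (γ - 1)).HolderConjugate γ := (Real.HolderConjugate.conjExponent hγ).symm
  have ha_ne_top (i : ι) : a i ≠ ⊤ :=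
    ne_top_of_le_ne_top ENNReal.one_ne_top ((ENNReal.le_tsum i).trans ha)
  have holder := ENNReal.lintegral_mul_le_Lp_mul_Lq Measure.count hpq
    (f := fun i => a i ^ (1 / (γ / (γ - 1)))) (g := fun i => a i ^ (1 / γ) * x i)
    measurable_from_top.aemeasurable measurable_from_top.aemeasurable
  simp only [lintegral_count, Pi.mul_apply] at holder
  have split (i : ι) : a i ^ (1 / (γ / (γ - 1))) * (a i ^ (1 / γ) * x i) = a i * x i := by
    rcases eq_or_ne (a i) 0 with h0 | h0
    · simp [h0, hγ0]
    · rw [← mul_assoc, ← ENNReal.rpow_add _ _ h0 (ha_ne_top i), one_div, one_div,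
        hpq.inv_add_inv_eq_one, ENNReal.rpow_one]
  rw [tsum_congr split] at holder
  simp only [← ENNReal.rpow_mul, one_div, inv_mul_cancel₀ hpq.ne_zero, ENNReal.rpow_one,
    ENNReal.mul_rpow_of_nonneg _ _ hγ0.le, inv_mul_cancel₀ hγ0.ne'] at holder
  calc (∑' i, a i * x i) ^ γ
      ≤ ((∑' i, a i) ^ (γ / (γ - 1))⁻¹ * (∑' i, a i * x i ^ γ) ^ γ⁻¹) ^ γ := by gcongr
    _ ≤ (1 * (∑' i, a i * x i ^ γ) ^ γ⁻¹) ^ γ := by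
      gcongr
      exact ENNReal.rpow_le_one ha (inv_nonneg.mpr hpq.nonneg)
    _ = ∑' i, a i * x i ^ γ := by
      rw [one_mul, ← ENNReal.rpow_mul, inv_mul_cancel₀ hγ0.ne', ENNReal.rpow_one]

theorem exists_one_lt_and_lt_mul {p t : ℝ} (h : p < t) : ∃ γ : ℝ, 1 < γ ∧ p < γ * t := by
  have hcont : Tendsto (fun γ : ℝ => γ * t) (𝓝[>] 1) (𝓝 (1 * t)) :=
    ((continuous_id.mul continuous_const).tendsto 1).mono_left nhdsWithin_le_nhds
  rw [one_mul] at hcont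
  exact ((eventually_mem_nhdsWithin (a := (1 : ℝ)) (s := Ioi 1)).and
    (hcont.eventually (lt_mem_nhds h))).exists

theorem measurable_pw (r : ℝ) : Measurable fun x : ℝ => pw x r :=
  Measurable.ite measurableSet_eq measurable_const (measurable_id.pow measurable_const)

theorem ofReal_pw_add_one {x : ℝ} (hx : 0 ≤ x) (r : ℝ) :
    ENNReal.ofReal (pw x (r + 1)) = ENNReal.ofReal x * ENNReal.ofReal (pw x r) := by
  rcases hx.eq_or_lt with rfl | hx
  · simp [pw]
  rw [pw, pw, if_neg hx.ne', if_neg hx.ne', ← ENNReal.ofReal_mul hx.le,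
    Real.rpow_add_one hx.ne', mul_comm]

theorem ofReal_pw_rpow {x : ℝ} (hx : 0 ≤ x) (r : ℝ) {γ : ℝ} (hγ : 0 < γ) :
    ENNReal.ofReal (pw x r) ^ γ = ENNReal.ofReal (pw x (r * γ)) := by
  rcases hx.eq_or_lt with rfl | hx
  · simp [pw, hγ]
  rw [pw, pw, if_neg hx.ne', if_neg hx.ne',
    ENNReal.ofReal_rpow_of_pos (Real.rpow_pos_of_pos hx _), ← Real.rpow_mul hx.le]

theorem pw_le_pw_of_exponent_ge {x r r' : ℝ} (hx0 : 0 ≤ x) (hx1 : x ≤ 1) (h : r ≤ r') :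
    pw x r' ≤ pw x r := by
  rcases hx0.eq_or_lt with rfl | hx0
  · simp [pw]
  simp only [pw, if_neg hx0.ne']
  exact Real.rpow_le_rpow_of_exponent_ge hx0 hx1 h

theorem pw_le_pw_of_nonpos {x y r : ℝ} (hx : 0 < x) (hxy : x ≤ y) (hr : r ≤ 0) :
    pw y r ≤ pw x r := by
  simp only [pw, if_neg hx.ne', if_neg (hx.trans_le hxy).ne']
  exact Real.rpow_le_rpow_of_nonpos hx hxy hr

theorem pw_le_one {x r : ℝ} (hx0 : 0 ≤ x) (hx1 : x ≤ 1) (hr : 0 ≤ r) : pw x r ≤ 1 := by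
  unfold pw
  split_ifs
  exacts [zero_le_one, Real.rpow_le_one hx0 hx1 hr]

namespace inS

variable {s : ℕ → ℝ}

theorem le_one (hs : inS s) (i : ℕ) : s i ≤ 1 := by
  simpa using hs.2.2 {i}

theorem antitone (hs : inS s) : Antitone s :=
  antitone_nat_of_succ_le hs.2.1

theorem tsum_ofReal_le_one (hs : inS s) : ∑' i, ENNReal.ofReal (s i) ≤ 1 :=
  ENNReal.tsum_le_of_sum_range_le fun n => by
    rw [← ENNReal.ofReal_sum_of_nonneg fun i _ => hs.1 i, ← ENNReal.ofReal_one]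
    exact ENNReal.ofReal_le_ofReal (hs.2.2 _)

theorem pos_one (hs : inS s) (hsum : HasSum s 1) (hne : s ≠ oneConf) : 0 < s 1 := by
  refine (hs.1 1).lt_of_ne' fun h1 => hne ?_
  have htail : ∀ i, i ≠ 0 → s i = 0 := fun i hi =>
    le_antisymm (h1 ▸ hs.antitone (Nat.one_le_iff_ne_zero.mpr hi)) (hs.1 i)
  have hs0 : s 0 = 1 := (hasSum_single 0 htail).unique hsum
  funext i
  rcases eq_or_ne i 0 with rfl | hi
  · simp [oneConf, hs0]
  · simp [oneConf, hi, htail i hi]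

end inS

theorem IsDislocation.ae_inS_pos_one {ν : Measure (ℕ → ℝ)} (hν : IsDislocation ν) :
    ∀ᵐ s ∂ν, inS s ∧ 0 < s 1 := by
  have hcarried : ∀ᵐ s ∂ν, inS s ∧ HasSum s 1 := by
    rw [ae_iff]
    simpa using hν.carried
  have hne : ∀ᵐ s ∂ν, s ≠ oneConf := by
    rw [ae_iff]
    simpa using hν.no_one
  filter_upwards [hcarried, hne] with s ⟨hs, hsum⟩ hne
  exact ⟨hs, hs.pos_one hsum hne⟩

/-- The integrand `Σ_{i≥2} sᵢ^{p+1}` of `pLow`; sequences are indexed from `0`. -/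
def tailMoment (p : ℝ) (s : ℕ → ℝ) : ℝ≥0∞ :=
  ∑' i, ENNReal.ofReal (pw (s (i + 1)) (p + 1))

theorem measurable_tailMoment (p : ℝ) : Measurable (tailMoment p) :=
  Measurable.tsum fun _ =>
    ENNReal.measurable_ofReal.comp ((measurable_pw _).comp (measurable_pi_apply _))

theorem tailMoment_anti {s : ℕ → ℝ} (hs : inS s) {p q : ℝ} (h : p ≤ q) :
    tailMoment q s ≤ tailMoment p s :=
  ENNReal.tsum_le_tsum fun _ => ENNReal.ofReal_le_ofReal <|
    pw_le_pw_of_exponent_ge (hs.1 _) (hs.le_one _) (by linarith)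

theorem ofReal_pw_zero_le {s : ℕ → ℝ} (hs : inS s) (h1 : 0 < s 1) (r : ℝ) :
    ENNReal.ofReal (pw (s 0) (r + 1)) ≤ 1 + tailMoment r s := by
  rcases le_or_gt 0 (r + 1) with hr | hr
  · calc ENNReal.ofReal (pw (s 0) (r + 1)) ≤ ENNReal.ofReal 1 :=
          ENNReal.ofReal_le_ofReal (pw_le_one (hs.1 0) (hs.le_one 0) hr)
      _ ≤ 1 + tailMoment r s := by rw [ENNReal.ofReal_one]; exact le_self_add
  · calc ENNReal.ofReal (pw (s 0) (r + 1)) ≤ ENNReal.ofReal (pw (s 1) (r + 1)) :=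
          ENNReal.ofReal_le_ofReal (pw_le_pw_of_nonpos h1 (hs.2.1 0) hr.le)
      _ ≤ tailMoment r s :=
          ENNReal.le_tsum (f := fun i => ENNReal.ofReal (pw (s (i + 1)) (r + 1))) 0
      _ ≤ 1 + tailMoment r s := le_add_self

theorem tsum_ofReal_pw_le {s : ℕ → ℝ} (hs : inS s) (h1 : 0 < s 1) (r : ℝ) :
    ∑' i, ENNReal.ofReal (pw (s i) (r + 1)) ≤ 1 + 2 * tailMoment r s :=
  calc ∑' i, ENNReal.ofReal (pw (s i) (r + 1))
      = ENNReal.ofReal (pw (s 0) (r + 1)) + tailMoment r s := tsum_eq_zero_add' ENNReal.summable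
    _ ≤ 1 + tailMoment r s + tailMoment r s := by gcongr; exact ofReal_pw_zero_le hs h1 r
    _ = 1 + 2 * tailMoment r s := by ring

theorem rpow_tsum_ofReal_pw_le {s : ℕ → ℝ} (hs : inS s) (θ : ℝ) {γ : ℝ} (hγ : 1 ≤ γ) :
    (∑' i, ENNReal.ofReal (pw (s i) θ)) ^ γ ≤
      ∑' i, ENNReal.ofReal (pw (s i) ((θ - 1) * γ + 1)) := by
  have hγ0 : 0 < γ := one_pos.trans_le hγ
  have hθ (i : ℕ) : ENNReal.ofReal (pw (s i) θ) =
      ENNReal.ofReal (s i) * ENNReal.ofReal (pw (s i) (θ - 1)) := by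
    rw [← ofReal_pw_add_one (hs.1 i), sub_add_cancel]
  calc (∑' i, ENNReal.ofReal (pw (s i) θ)) ^ γ
      ≤ ∑' i, ENNReal.ofReal (s i) * ENNReal.ofReal (pw (s i) (θ - 1)) ^ γ := by
        simp only [hθ]
        exact ENNReal.tsum_mul_rpow_le _ _ hs.tsum_ofReal_le_one hγ
    _ = ∑' i, ENNReal.ofReal (pw (s i) ((θ - 1) * γ + 1)) := by
        simp only [ofReal_pw_rpow (hs.1 _) _ hγ0, ofReal_pw_add_one (hs.1 _)]

/-- If moreover `ν` is a finite measure, then for every `θ` with `θ - 1 > p̲`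
there exists `γ > 1` with `∫_S (Σ_{i≥1} sᵢ^θ)^γ ν(ds) < ∞`. -/
theorem moment_gamma_finite (ν : Measure (ℕ → ℝ)) (hν : IsDislocation ν)
    [IsFiniteMeasure ν] (θ : ℝ) (hθ : pLow ν < ((θ - 1 : ℝ) : EReal)) :
    ∃ γ : ℝ, 1 < γ ∧
      ∫⁻ s, (∑' i, ENNReal.ofReal (pw (s i) θ)) ^ γ ∂ν < ⊤ := by
  obtain ⟨_, ⟨p, rfl, hp⟩, hpθ⟩ := sInf_lt_iff.mp hθ
  obtain ⟨γ, hγ, hpγ⟩ := exists_one_lt_and_lt_mul (EReal.coe_lt_coe_iff.mp hpθ)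
  have hbound : ∀ᵐ s ∂ν, (∑' i, ENNReal.ofReal (pw (s i) θ)) ^ γ ≤ 1 + 2 * tailMoment p s := by
    filter_upwards [hν.ae_inS_pos_one] with s ⟨hs, h1⟩
    calc (∑' i, ENNReal.ofReal (pw (s i) θ)) ^ γ
        ≤ ∑' i, ENNReal.ofReal (pw (s i) ((θ - 1) * γ + 1)) := rpow_tsum_ofReal_pw_le hs θ hγ.le
      _ ≤ 1 + 2 * tailMoment ((θ - 1) * γ) s := tsum_ofReal_pw_le hs h1 _
      _ ≤ 1 + 2 * tailMoment p s := by
        gcongr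
        exact tailMoment_anti hs (by linarith)
  refine ⟨γ, hγ, (lintegral_mono_ae hbound).trans_lt ?_⟩
  rw [lintegral_add_left measurable_const, lintegral_const_mul _ (measurable_tailMoment p),
    lintegral_const, one_mul]
  exact ENNReal.add_lt_top.mpr ⟨measure_lt_top ν univ, ENNReal.mul_lt_top (by norm_num) hp⟩
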